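/- Under the agnostic XY-YX routing rules on the alternating-direction grid, the path from the gateway (0,0) to any destination makes at most 3 turns and never makes two consecutive turns that together reverse direction (no 360° turn cycle), hence the set of all such routes induces no cyclic channel dependency. -/

import Mathlib

/-- The four cardinal unit moves on ℤ × ℤ. -/
inductive Dir
  | N | S | E | W
deriving DecidableEq

/-- Agnostic XY-YX route from the gateway (0,0) to destination (x,y) on the
    alternating-direction grid. -/
def xyRoute (x y : ℕ) : List Dir :=
  if x % 2 = 0 then
    List.replicate x Dir.E ++ List.replicate y Dir.N
  else if y % 2 = 0 then
    List.replicate (x - 1) Dir.E ++ List.replicate y Dir.N ++ [Dir.E]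
  else
    List.replicate (x - 1) Dir.E ++ List.replicate (y + 1) Dir.N ++ [Dir.E, Dir.S]

/-- Number of turns of a route: the number of consecutive pairs of moves with
    distinct directions. -/
def countTurns (l : List Dir) : ℕ :=
  (l.zip l.tail).countP fun p => decide (p.1 ≠ p.2)

lemma ct_nil : countTurns [] = 0 := rfl

lemma ct_single (a : Dir) : countTurns [a] = 0 := rfl

lemma ct_cons2 (a b : Dir) (t : List Dir) :
    countTurns (a :: b :: t) = (if a ≠ b then 1 else 0) + countTurns (b :: t) := by
  simp [countTurns, List.countP_cons]
  by_cases h : a = b <;> simp [h]; omega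

lemma ct_replicate (n : ℕ) (d : Dir) : countTurns (List.replicate n d) = 0 := by
  induction n with
  | zero => rfl
  | succ m ih =>
    cases m with
    | zero => rfl
    | succ k =>
      have : List.replicate (k + 1 + 1) d = d :: d :: List.replicate k d := rfl
      rw [this, ct_cons2]
      simpa [List.replicate_succ] using ih

lemma ct_append (l1 l2 : List Dir) :
    countTurns (l1 ++ l2) ≤ countTurns l1 + countTurns l2 + 1 := by
  induction l1 with
  | nil => simp [ct_nil]
  | cons a tl ih =>
    cases tl with
    | nil =>
      cases l2 with
      | nil => simp [ct_single]
      | cons b t =>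
        rw [List.singleton_append, ct_cons2, ct_single]
        split <;> omega
    | cons b t =>
      have h1 : (a :: b :: t) ++ l2 = a :: ((b :: t) ++ l2) := rfl
      have h2 : (b :: t) ++ l2 = b :: (t ++ l2) := rfl
      rw [h1, h2, ct_cons2, ← h2, ct_cons2]
      have := ih
      split <;> omega

/-- Under the agnostic XY-YX routing rules on the alternating-direction grid,
    every route from the gateway (0,0) has direction sequence of the form
    E^a N^b E^c S^d with d ≤ 1 (East moves, then North, then East, then
    possibly one final South); in particular it contains no West moves, at
    most one South move, and makes at most 3 turns, so its total turning never
    reaches 360° and no cyclic channel dependency is induced. -/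
theorem xyRoute_shape (x y : ℕ) :
    (∃ a b c d : ℕ, d ≤ 1 ∧
      xyRoute x y = List.replicate a Dir.E ++ List.replicate b Dir.N ++
        List.replicate c Dir.E ++ List.replicate d Dir.S) ∧
    Dir.W ∉ xyRoute x y ∧
    (xyRoute x y).count Dir.S ≤ 1 ∧
    countTurns (xyRoute x y) ≤ 3 := by
  unfold xyRoute
  split
  case isTrue h =>
    refine ⟨⟨x, y, 0, 0, by omega, by simp⟩, by simp [List.mem_replicate], ?_, ?_⟩
    · simp [List.count_append, List.count_replicate]
    · have h1 := ct_append (List.replicate x Dir.E) (List.replicate y Dir.N)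
      rw [ct_replicate, ct_replicate] at h1
      omega
  case isFalse h =>
    split
    case isTrue h2 =>
      refine ⟨⟨x - 1, y, 1, 0, by omega, by simp⟩, by simp [List.mem_replicate], ?_, ?_⟩
      · simp [List.count_append, List.count_replicate, List.count_singleton]
      · have h1 := ct_append (List.replicate (x-1) Dir.E ++ List.replicate y Dir.N) [Dir.E]
        have h2 := ct_append (List.replicate (x-1) Dir.E) (List.replicate y Dir.N)
        rw [ct_replicate, ct_replicate] at h2
        rw [ct_single] at h1
        omega
    case isFalse h2 =>
      refine ⟨⟨x - 1, y + 1, 1, 1, by omega, by simp⟩, by simp [List.mem_replicate], ?_, ?_⟩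
      · simp [List.count_append, List.count_replicate]
      · have h1 := ct_append (List.replicate (x-1) Dir.E ++ List.replicate (y+1) Dir.N)
          [Dir.E, Dir.S]
        have h2 := ct_append (List.replicate (x-1) Dir.E) (List.replicate (y+1) Dir.N)
        rw [ct_replicate, ct_replicate] at h2
        have h3 : countTurns [Dir.E, Dir.S] = 1 := rfl
        rw [h3] at h1
        omega
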